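/- arXiv:2104.14750 — 10 statements merged into one kernel-verified Lean document; each statement's English description precedes it below -/
import Mathlib

section
/- Let h : ℝⁿ → (-∞,∞] be σ-strongly convex, ε ≥ 0, and t ∈ (0,1]. Then for any x, z ∈ dom h and any y in the ε-subdifferential of h at x, one has h(z) ≥ h(x) + ⟨y, z - x⟩ + (σ(1-t)/2)‖z - x‖² - ε/t. -/
open RealInnerProductSpace

/-! Evaluate the `ε`-subgradient inequality at the point `w = x + t • (z - x)` of the segment
from `x` to `z` and bound `f w` from above by strong convexity; after cancelling `(1 - t) • f x`
everything carries a factor `t` except `ε`, and dividing by `t` gives the claim. -/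

variable {E : Type*} [NormedAddCommGroup E] [InnerProductSpace ℝ E]

theorem strongConvexOn_univ_of_forall_le {f : E → ℝ} {m : ℝ}
    (hf : ∀ x z : E, ∀ l ∈ Set.Icc (0 : ℝ) 1,
      f (l • x + (1 - l) • z) ≤ l * f x + (1 - l) * f z - m / 2 * (l * (1 - l)) * ‖x - z‖ ^ 2) :
    StrongConvexOn Set.univ m f := by
  refine ⟨convex_univ, fun x _ z _ a b ha hb hab => ?_⟩
  obtain rfl : b = 1 - a := by linarith
  have := hf x z a ⟨ha, by linarith⟩
  simp only [smul_eq_mul]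
  linarith

theorem StrongConvexOn.add_inner_add_sq_sub_div_le {s : Set E} {m ε t : ℝ} {f : E → ℝ}
    {x y z : E} (hf : StrongConvexOn s m f) (hx : x ∈ s) (hz : z ∈ s)
    (hy : ∀ w ∈ s, f x + ⟪y, w - x⟫ - ε ≤ f w) (ht₀ : 0 < t) (ht₁ : t ≤ 1) :
    f x + ⟪y, z - x⟫ + m * (1 - t) / 2 * ‖z - x‖ ^ 2 - ε / t ≤ f z := by
  have hw : (1 - t) • x + t • z - x = t • (z - x) := by
    rw [sub_smul, one_smul, smul_sub]; abel
  have hws : (1 - t) • x + t • z ∈ s := hf.1 hx hz (by linarith) ht₀.le (by ring)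
  have upper := hf.2 hx hz (sub_nonneg.2 ht₁) ht₀.le (by ring)
  have lower := hy _ hws
  rw [hw, real_inner_smul_right] at lower
  rw [smul_eq_mul, smul_eq_mul, norm_sub_rev] at upper
  have key : t * (f x + ⟪y, z - x⟫ + m * (1 - t) / 2 * ‖z - x‖ ^ 2) - ε ≤ t * f z := by
    linarith
  rw [sub_le_iff_le_add, ← le_div_iff₀' ht₀] at key
  rw [add_div, mul_div_cancel_left₀ _ ht₀.ne'] at key
  linarith

theorem eps_subgradient_strong_convex_general {n : ℕ} (h : EuclideanSpace ℝ (Fin n) → ℝ)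
    (σ ε t : ℝ) (ht : t ∈ Set.Ioc (0 : ℝ) 1)
    (hsc : ∀ x z : EuclideanSpace ℝ (Fin n), ∀ l ∈ Set.Icc (0 : ℝ) 1,
      h (l • x + (1 - l) • z) ≤ l * h x + (1 - l) * h z - σ / 2 * (l * (1 - l)) * ‖x - z‖ ^ 2)
    (x z y : EuclideanSpace ℝ (Fin n))
    (hy : ∀ w, h x + ⟪y, w - x⟫ - ε ≤ h w) :
    h x + ⟪y, z - x⟫ + σ * (1 - t) / 2 * ‖z - x‖ ^ 2 - ε / t ≤ h z :=
  (strongConvexOn_univ_of_forall_le hsc).add_inner_add_sq_sub_div_le (Set.mem_univ x)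
    (Set.mem_univ z) (fun w _ => hy w) ht.1 ht.2

/-- Lemma 2.1: σ-strong convexity plus ε-subgradient inequality gives the refined bound. -/
theorem eps_subgradient_strong_convex {n : ℕ} (h : EuclideanSpace ℝ (Fin n) → ℝ)
    (σ ε t : ℝ) (hσ : 0 ≤ σ) (hε : 0 ≤ ε) (ht : t ∈ Set.Ioc (0 : ℝ) 1)
    (hsc : ∀ x z : EuclideanSpace ℝ (Fin n), ∀ l ∈ Set.Icc (0 : ℝ) 1,
      h (l • x + (1 - l) • z) ≤ l * h x + (1 - l) * h z - σ / 2 * (l * (1 - l)) * ‖x - z‖ ^ 2)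
    (x z y : EuclideanSpace ℝ (Fin n))
    (hy : ∀ w, h x + ⟪y, w - x⟫ - ε ≤ h w) :
    h x + ⟪y, z - x⟫ + σ * (1 - t) / 2 * ‖z - x‖ ^ 2 - ε / t ≤ h z :=
  eps_subgradient_strong_convex_general h σ ε t ht hsc x z y hy
end

section
/- Let f = f₁ - f₂ where f₁ is σ₁-strongly convex and f₂ is σ₂-strongly convex with σ₁ + σ₂ > 0. Let γ ∈ [0, (σ₁+σ₂)/2) and suppose the sequences {xᵏ}, {yᵏ} satisfy yᵏ ∈ ∂f₂(xᵏ) and yᵏ + γ(xᵏ - xᵏ⁻¹) ∈ ∂f₁(xᵏ⁺¹). Then f(xᵏ) ≥ f(xᵏ⁺¹) + γ⟨xᵏ - xᵏ⁻¹, xᵏ - xᵏ⁺¹⟩ + ((σ₁+σ₂)/2)‖xᵏ⁺¹ - xᵏ‖². -/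
open RealInnerProductSpace

/-- The convex subdifferential of an ℝ-valued function. -/
def subdiff {n : ℕ} (f : EuclideanSpace ℝ (Fin n) → ℝ) (x : EuclideanSpace ℝ (Fin n)) :
    Set (EuclideanSpace ℝ (Fin n)) :=
  {y | ∀ z, f x + ⟪y, z - x⟫ ≤ f z}

/-- σ-strong convexity: f - (σ/2)‖·‖² is convex. -/
def StrongConvex {n : ℕ} (σ : ℝ) (f : EuclideanSpace ℝ (Fin n) → ℝ) : Prop :=
  ConvexOn ℝ Set.univ (fun x => f x - σ / 2 * ‖x‖ ^ 2)

/-!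
A subgradient `v` of an `m`-strongly convex `f` at `x` gives the quadratic minorant
`f z ≥ f x + ⟪v, z - x⟫ + m/2 ‖z - x‖²` (strong convexity on `[x, z]`, letting the segment
parameter tend to `0`). Adding this for `f₂` at `xᵏ` and for `f₁` at `xᵏ⁺¹`, the terms in `yᵏ`
cancel and what remains is the inertial term and the combined curvature `σ₁ + σ₂`.
-/

open Filter Topology

section StrongSubgradient

variable {E : Type*} [NormedAddCommGroup E] [InnerProductSpace ℝ E]
  {s : Set E} {m : ℝ} {f : E → ℝ} {x z v : E}

lemma StrongConvexOn.inner_add_one_sub_mul_sq_le (hf : StrongConvexOn s m f)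
    (hx : x ∈ s) (hz : z ∈ s) (hv : ∀ y ∈ s, f x + ⟪v, y - x⟫ ≤ f y)
    {t : ℝ} (ht₀ : 0 < t) (ht₁ : t ≤ 1) :
    ⟪v, z - x⟫ + (1 - t) * (m / 2 * ‖z - x‖ ^ 2) ≤ f z - f x := by
  -- compare both inequalities at the point `(1 - t) • x + t • z`, then divide by `t`
  have hconv := hf.2 hx hz (sub_nonneg.2 ht₁) ht₀.le (sub_add_cancel 1 t)
  have hsub := hv _ (hf.1 hx hz (sub_nonneg.2 ht₁) ht₀.le (sub_add_cancel 1 t))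
  have hdisp : (1 - t) • x + t • z - x = t • (z - x) := by module
  rw [hdisp, real_inner_smul_right] at hsub
  rw [smul_eq_mul, smul_eq_mul, norm_sub_rev] at hconv
  have : t * (⟪v, z - x⟫ + (1 - t) * (m / 2 * ‖z - x‖ ^ 2)) ≤ t * (f z - f x) := by
    linarith
  exact le_of_mul_le_mul_left this ht₀

lemma StrongConvexOn.add_inner_add_sq_le (hf : StrongConvexOn s m f)
    (hx : x ∈ s) (hz : z ∈ s) (hv : ∀ y ∈ s, f x + ⟪v, y - x⟫ ≤ f y) :
    f x + ⟪v, z - x⟫ + m / 2 * ‖z - x‖ ^ 2 ≤ f z := by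
  have hlim : Tendsto (fun t : ℝ => ⟪v, z - x⟫ + (1 - t) * (m / 2 * ‖z - x‖ ^ 2))
      (𝓝[>] 0) (𝓝 (⟪v, z - x⟫ + m / 2 * ‖z - x‖ ^ 2)) := by
    refine Tendsto.mono_left ?_ nhdsWithin_le_nhds
    have hcont : Continuous fun t : ℝ => ⟪v, z - x⟫ + (1 - t) * (m / 2 * ‖z - x‖ ^ 2) := by
      fun_prop
    simpa using hcont.tendsto 0
  have hle : ∀ᶠ t in 𝓝[>] (0 : ℝ),
      ⟪v, z - x⟫ + (1 - t) * (m / 2 * ‖z - x‖ ^ 2) ≤ f z - f x :=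
    Filter.mem_of_superset (Ioo_mem_nhdsGT zero_lt_one) fun t ht =>
      hf.inner_add_one_sub_mul_sq_le hx hz hv ht.1 ht.2.le
  linarith [le_of_tendsto hlim hle]

end StrongSubgradient

theorem RInDCAe_key_inequality_general {n : ℕ}
    (f₁ f₂ : EuclideanSpace ℝ (Fin n) → ℝ) (σ₁ σ₂ γ : ℝ)
    (hf₁ : StrongConvex σ₁ f₁) (hf₂ : StrongConvex σ₂ f₂)
    (xkm1 xk xkp1 yk : EuclideanSpace ℝ (Fin n))
    (hyk : yk ∈ subdiff f₂ xk)
    (hstep : yk + γ • (xk - xkm1) ∈ subdiff f₁ xkp1) :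
    f₁ xk - f₂ xk ≥ (f₁ xkp1 - f₂ xkp1) + γ * ⟪xk - xkm1, xk - xkp1⟫
      + (σ₁ + σ₂) / 2 * ‖xkp1 - xk‖ ^ 2 := by
  have h₁ := (strongConvexOn_iff_convex.2 hf₁).add_inner_add_sq_le (Set.mem_univ xkp1)
    (Set.mem_univ xk) fun y _ => hstep y
  have h₂ := (strongConvexOn_iff_convex.2 hf₂).add_inner_add_sq_le (Set.mem_univ xk)
    (Set.mem_univ xkp1) fun y _ => hyk y
  have hcancel : ⟪yk, xk - xkp1⟫ + ⟪yk, xkp1 - xk⟫ = 0 := by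
    rw [← inner_add_right, sub_add_sub_cancel, sub_self, inner_zero_right]
  rw [inner_add_left, real_inner_smul_left, norm_sub_rev] at h₁
  linarith

/-- One-step key inequality (3.8) for the exact refined inertial DCA. -/
theorem RInDCAe_key_inequality {n : ℕ}
    (f₁ f₂ : EuclideanSpace ℝ (Fin n) → ℝ) (σ₁ σ₂ γ : ℝ)
    (hσ₁ : 0 ≤ σ₁) (hσ₂ : 0 ≤ σ₂) (hpos : 0 < σ₁ + σ₂)
    (hγ : γ ∈ Set.Ico (0 : ℝ) ((σ₁ + σ₂) / 2))
    (hf₁ : StrongConvex σ₁ f₁) (hf₂ : StrongConvex σ₂ f₂)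
    (xkm1 xk xkp1 yk : EuclideanSpace ℝ (Fin n))
    (hyk : yk ∈ subdiff f₂ xk)
    (hstep : yk + γ • (xk - xkm1) ∈ subdiff f₁ xkp1) :
    f₁ xk - f₂ xk ≥ (f₁ xkp1 - f₂ xkp1) + γ * ⟪xk - xkm1, xk - xkp1⟫
      + (σ₁ + σ₂) / 2 * ‖xkp1 - xk‖ ^ 2 :=
  RInDCAe_key_inequality_general f₁ f₂ σ₁ σ₂ γ hf₁ hf₂ xkm1 xk xkp1 yk hyk hstep
end

section
/- Under the same assumptions as the previous statement (exact refined inertial DCA iteration with σ₁ + σ₂ > 0 and γ ∈ [0,(σ₁+σ₂)/2)), for all k ≥ 0: f(xᵏ⁺¹) + ((σ₁+σ₂-γ)/2)‖xᵏ⁺¹ - xᵏ‖² ≤ f(xᵏ) + ((σ₁+σ₂-γ)/2)‖xᵏ - xᵏ⁻¹‖² - ((σ₁+σ₂-2γ)/2)‖xᵏ - xᵏ⁻¹‖². In particular, the sequence k ↦ f(xᵏ) + ((σ₁+σ₂-γ)/2)‖xᵏ - xᵏ⁻¹‖² is nonincreasing. -/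
open RealInnerProductSpace Filter Topology

theorem norm_add_smul_sub_sq {E : Type*} [NormedAddCommGroup E] [InnerProductSpace ℝ E]
    (x z : E) (t : ℝ) :
    ‖x + t • (z - x)‖ ^ 2 = (1 - t) * ‖x‖ ^ 2 + t * ‖z‖ ^ 2 - t * (1 - t) * ‖z - x‖ ^ 2 := by
  simp only [← real_inner_self_eq_norm_sq, inner_add_left, inner_add_right, inner_sub_left,
    inner_sub_right, real_inner_smul_left, real_inner_smul_right, real_inner_comm x z]
  ring

namespace StrongConvex

variable {n : ℕ} {σ : ℝ} {f : EuclideanSpace ℝ (Fin n) → ℝ}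

theorem apply_add_smul_sub_le (hf : StrongConvex σ f) (x z : EuclideanSpace ℝ (Fin n)) {t : ℝ}
    (ht₀ : 0 ≤ t) (ht₁ : t ≤ 1) :
    f (x + t • (z - x)) ≤ f x + t * (f z - f x) - σ / 2 * t * (1 - t) * ‖z - x‖ ^ 2 := by
  have hconv := hf.2 (Set.mem_univ x) (Set.mem_univ z) (sub_nonneg.2 ht₁) ht₀ (by ring)
  have hpt : (1 - t) • x + t • z = x + t • (z - x) := by module
  simp only [smul_eq_mul, hpt, norm_add_smul_sub_sq] at hconv
  linarith

theorem add_inner_add_sq_le (hf : StrongConvex σ f) {x y : EuclideanSpace ℝ (Fin n)}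
    (hy : y ∈ subdiff f x) (z : EuclideanSpace ℝ (Fin n)) :
    f x + ⟪y, z - x⟫ + σ / 2 * ‖z - x‖ ^ 2 ≤ f z := by
  -- Compare both inequalities at `x + t • (z - x)`, divide by `t`, and let `t → 0⁺`.
  have hlim : Tendsto (fun t : ℝ => f x + ⟪y, z - x⟫ + σ / 2 * (1 - t) * ‖z - x‖ ^ 2)
      (𝓝[>] 0) (𝓝 (f x + ⟪y, z - x⟫ + σ / 2 * ‖z - x‖ ^ 2)) :=
    tendsto_nhdsWithin_of_tendsto_nhds (Continuous.tendsto' (by fun_prop) _ _ (by ring))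
  refine le_of_tendsto hlim ?_
  filter_upwards [Ioc_mem_nhdsGT zero_lt_one] with t ⟨ht₀, ht₁⟩
  have hsub := hy (x + t • (z - x))
  rw [add_sub_cancel_left, real_inner_smul_right] at hsub
  have hconv := hf.apply_add_smul_sub_le x z ht₀.le ht₁
  have hscaled : t * (f x + ⟪y, z - x⟫ + σ / 2 * (1 - t) * ‖z - x‖ ^ 2) ≤ t * f z := by
    linarith
  exact le_of_mul_le_mul_left hscaled ht₀

end StrongConvex

theorem dc_inertial_step_le {n : ℕ} {f₁ f₂ : EuclideanSpace ℝ (Fin n) → ℝ} {σ₁ σ₂ γ : ℝ}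
    (hγ : 0 ≤ γ) (hf₁ : StrongConvex σ₁ f₁) (hf₂ : StrongConvex σ₂ f₂)
    {x₀ x₁ x₂ y : EuclideanSpace ℝ (Fin n)} (hy : y ∈ subdiff f₂ x₁)
    (hstep : y + γ • (x₁ - x₀) ∈ subdiff f₁ x₂) :
    f₁ x₂ - f₂ x₂ + (σ₁ + σ₂ - γ) / 2 * ‖x₂ - x₁‖ ^ 2
      ≤ f₁ x₁ - f₂ x₁ + γ / 2 * ‖x₁ - x₀‖ ^ 2 := by
  have h₁ := hf₁.add_inner_add_sq_le hstep x₁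
  have h₂ := hf₂.add_inner_add_sq_le hy x₂
  have hrev : x₁ - x₂ = -(x₂ - x₁) := (neg_sub x₂ x₁).symm
  rw [hrev, inner_neg_right, inner_add_left, real_inner_smul_left, norm_neg] at h₁
  have hyoung : γ * ⟪x₁ - x₀, x₂ - x₁⟫ ≤ γ / 2 * (‖x₁ - x₀‖ ^ 2 + ‖x₂ - x₁‖ ^ 2) :=
    calc γ * ⟪x₁ - x₀, x₂ - x₁⟫ ≤ γ * (‖x₁ - x₀‖ * ‖x₂ - x₁‖) :=
          mul_le_mul_of_nonneg_left (real_inner_le_norm _ _) hγ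
      _ ≤ γ / 2 * (‖x₁ - x₀‖ ^ 2 + ‖x₂ - x₁‖ ^ 2) := by
          nlinarith [two_mul_le_add_sq ‖x₁ - x₀‖ ‖x₂ - x₁‖]
  linarith

/-- `x k` is the paper's iterate `x^{k-1}` (so `x 0 = x^{-1}`, `x 1 = x^0`), and `y k` is `y^k`. -/
theorem RInDCAe_descent_general {n : ℕ}
    (f₁ f₂ : EuclideanSpace ℝ (Fin n) → ℝ) (σ₁ σ₂ γ : ℝ)
    (hγ : γ ∈ Set.Ico (0 : ℝ) ((σ₁ + σ₂) / 2))
    (hf₁ : StrongConvex σ₁ f₁) (hf₂ : StrongConvex σ₂ f₂)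
    (x y : ℕ → EuclideanSpace ℝ (Fin n))
    (hy : ∀ k, y k ∈ subdiff f₂ (x (k + 1)))
    (hstep : ∀ k, y k + γ • (x (k + 1) - x k) ∈ subdiff f₁ (x (k + 2))) :
    (∀ k, (f₁ (x (k + 2)) - f₂ (x (k + 2))) + (σ₁ + σ₂ - γ) / 2 * ‖x (k + 2) - x (k + 1)‖ ^ 2
        ≤ (f₁ (x (k + 1)) - f₂ (x (k + 1))) + (σ₁ + σ₂ - γ) / 2 * ‖x (k + 1) - x k‖ ^ 2
          - (σ₁ + σ₂ - 2 * γ) / 2 * ‖x (k + 1) - x k‖ ^ 2) ∧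
    Antitone (fun k =>
      (f₁ (x (k + 1)) - f₂ (x (k + 1))) + (σ₁ + σ₂ - γ) / 2 * ‖x (k + 1) - x k‖ ^ 2) := by
  obtain ⟨hγ₀, hγ₁⟩ := hγ
  have hdescent k := dc_inertial_step_le hγ₀ hf₁ hf₂ (hy k) (hstep k)
  refine ⟨fun k => by linarith [hdescent k], antitone_nat_of_succ_le fun k => ?_⟩
  have hweight : γ / 2 * ‖x (k + 1) - x k‖ ^ 2 ≤ (σ₁ + σ₂ - γ) / 2 * ‖x (k + 1) - x k‖ ^ 2 :=
    mul_le_mul_of_nonneg_right (by linarith) (sq_nonneg _)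
  linarith [hdescent k]

/-- Lemma 3.1: descent of the Lyapunov sequence for the exact refined inertial DCA.
Here `x k` denotes the iterate `x^{k-1}` (so `x 0 = x^{-1}`, `x 1 = x^0`), and
`y k` denotes `y^k ∈ ∂f₂(x^k)`. -/
theorem RInDCAe_descent {n : ℕ}
    (f₁ f₂ : EuclideanSpace ℝ (Fin n) → ℝ) (σ₁ σ₂ γ : ℝ)
    (hσ₁ : 0 ≤ σ₁) (hσ₂ : 0 ≤ σ₂) (hpos : 0 < σ₁ + σ₂)
    (hγ : γ ∈ Set.Ico (0 : ℝ) ((σ₁ + σ₂) / 2))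
    (hf₁ : StrongConvex σ₁ f₁) (hf₂ : StrongConvex σ₂ f₂)
    (x y : ℕ → EuclideanSpace ℝ (Fin n)) (hinit : x 0 = x 1)
    (hy : ∀ k, y k ∈ subdiff f₂ (x (k + 1)))
    (hstep : ∀ k, y k + γ • (x (k + 1) - x k) ∈ subdiff f₁ (x (k + 2))) :
    (∀ k, (f₁ (x (k + 2)) - f₂ (x (k + 2))) + (σ₁ + σ₂ - γ) / 2 * ‖x (k + 2) - x (k + 1)‖ ^ 2
        ≤ (f₁ (x (k + 1)) - f₂ (x (k + 1))) + (σ₁ + σ₂ - γ) / 2 * ‖x (k + 1) - x k‖ ^ 2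
          - (σ₁ + σ₂ - 2 * γ) / 2 * ‖x (k + 1) - x k‖ ^ 2) ∧
    Antitone (fun k =>
      (f₁ (x (k + 1)) - f₂ (x (k + 1))) + (σ₁ + σ₂ - γ) / 2 * ‖x (k + 1) - x k‖ ^ 2) :=
  RInDCAe_descent_general f₁ f₂ σ₁ σ₂ γ hγ hf₁ hf₂ x y hy hstep
end

section
/- Let f = f₁ - f₂ be level-bounded, f₁ σ₁-convex, f₂ σ₂-convex, σ₁+σ₂ > 0, γ ∈ [0,(σ₁+σ₂)/2), and let {xᵏ} be generated by the exact refined inertial DCA with x⁻¹ = x⁰ ∈ dom f₁. Then the sequence {xᵏ} is bounded. -/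
/-!
With `f = f₁ - f₂`, the strong subgradient inequalities for `f₁` at `xᵏ⁺¹` and for `f₂` at `xᵏ`,
added up, give `f(xᵏ⁺¹) + (σ₁ + σ₂)/2 ‖xᵏ⁺¹ - xᵏ‖² ≤ f(xᵏ) - γ ⟪xᵏ - xᵏ⁻¹, xᵏ - xᵏ⁺¹⟫`.
Bounding the inertial term by Young's inequality and using `2γ ≤ σ₁ + σ₂` shows that the energy
`f(xᵏ) + γ/2 ‖xᵏ - xᵏ⁻¹‖²` is nonincreasing. Since `x⁻¹ = x⁰`, every iterate lies in the
sublevel set `{f ≤ f(x⁰)}`, which is bounded.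
-/

open RealInnerProductSpace

open Set Filter Topology

section InnerProductSpace

variable {E : Type*} [NormedAddCommGroup E] [InnerProductSpace ℝ E]

theorem StrongConvexOn.add_inner_add_le {f : E → ℝ} {m : ℝ} (hf : StrongConvexOn univ m f)
    {x y : E} (hy : ∀ z, f x + ⟪y, z - x⟫ ≤ f z) (z : E) :
    f x + ⟪y, z - x⟫ + m / 2 * ‖z - x‖ ^ 2 ≤ f z := by
  have along_segment : ∀ t ∈ Ioc (0 : ℝ) 1,
      ⟪y, z - x⟫ + (1 - t) * (m / 2 * ‖z - x‖ ^ 2) ≤ f z - f x := by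
    rintro t ⟨ht0, ht1⟩
    have hconv := hf.2 (mem_univ x) (mem_univ z) (sub_nonneg.2 ht1) ht0.le (sub_add_cancel 1 t)
    have hsub := hy ((1 - t) • x + t • z)
    have hdir : (1 - t) • x + t • z - x = t • (z - x) := by
      rw [sub_smul, one_smul, smul_sub]; abel
    rw [hdir, real_inner_smul_right] at hsub
    rw [norm_sub_rev] at hconv
    simp only [smul_eq_mul] at hconv
    have : t * (⟪y, z - x⟫ + (1 - t) * (m / 2 * ‖z - x‖ ^ 2)) ≤ t * (f z - f x) := by
      linarith
    exact le_of_mul_le_mul_left this ht0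
  have hlim : Tendsto (fun t : ℝ => ⟪y, z - x⟫ + (1 - t) * (m / 2 * ‖z - x‖ ^ 2)) (𝓝[>] 0)
      (𝓝 (⟪y, z - x⟫ + (1 - 0) * (m / 2 * ‖z - x‖ ^ 2))) :=
    ((continuous_const.add ((continuous_const.sub continuous_id).mul continuous_const)).tendsto
      0).mono_left nhdsWithin_le_nhds
  have := le_of_tendsto hlim (mem_of_superset (Ioc_mem_nhdsGT one_pos) along_segment)
  linarith

theorem inertial_dca_energy_le {f₁ f₂ : E → ℝ} {m₁ m₂ γ : ℝ} (hf₁ : StrongConvexOn univ m₁ f₁)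
    (hf₂ : StrongConvexOn univ m₂ f₂) (hγ0 : 0 ≤ γ) (hγ : 2 * γ ≤ m₁ + m₂) {a b c y : E}
    (hy : ∀ z, f₂ b + ⟪y, z - b⟫ ≤ f₂ z) (hstep : ∀ z, f₁ c + ⟪y + γ • (b - a), z - c⟫ ≤ f₁ z) :
    f₁ c - f₂ c + γ / 2 * ‖c - b‖ ^ 2 ≤ f₁ b - f₂ b + γ / 2 * ‖b - a‖ ^ 2 := by
  have h₂ := hf₂.add_inner_add_le hy c
  have h₁ := hf₁.add_inner_add_le hstep b
  rw [inner_add_left, real_inner_smul_left, norm_sub_rev b c, ← neg_sub c b, inner_neg_right,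
    inner_neg_right] at h₁
  have young : 0 ≤ ‖b - a‖ ^ 2 - 2 * ⟪b - a, c - b⟫ + ‖c - b‖ ^ 2 := by
    rw [← norm_sub_sq_real]; positivity
  nlinarith [mul_nonneg hγ0 young, mul_le_mul_of_nonneg_right hγ (sq_nonneg ‖c - b‖)]

theorem inertial_dca_objective_le_initial {f₁ f₂ : E → ℝ} {m₁ m₂ γ : ℝ} (hf₁ : StrongConvexOn univ m₁ f₁)
    (hf₂ : StrongConvexOn univ m₂ f₂) (hγ0 : 0 ≤ γ) (hγ : 2 * γ ≤ m₁ + m₂) {x y : ℕ → E}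
    (hinit : x 0 = x 1) (hy : ∀ k z, f₂ (x (k + 1)) + ⟪y k, z - x (k + 1)⟫ ≤ f₂ z)
    (hstep : ∀ k z, f₁ (x (k + 2)) + ⟪y k + γ • (x (k + 1) - x k), z - x (k + 2)⟫ ≤ f₁ z)
    (k : ℕ) : f₁ (x k) - f₂ (x k) ≤ f₁ (x 1) - f₂ (x 1) := by
  have energy_antitone : Antitone fun k =>
      f₁ (x (k + 1)) - f₂ (x (k + 1)) + γ / 2 * ‖x (k + 1) - x k‖ ^ 2 :=
    antitone_nat_of_succ_le fun k => inertial_dca_energy_le hf₁ hf₂ hγ0 hγ (hy k) (hstep k)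
  cases k with
  | zero => rw [hinit]
  | succ k =>
    have := energy_antitone (Nat.zero_le k)
    simp only [zero_add, hinit, sub_self, norm_zero] at this
    have : 0 ≤ γ / 2 * ‖x (k + 1) - x k‖ ^ 2 := by positivity
    linarith

end InnerProductSpace

-- `x (k + 1)` is the paper's `xᵏ`; in particular `x 0` is `x⁻¹`.
theorem RInDCAe_bounded_general {n : ℕ}
    (f₁ f₂ : EuclideanSpace ℝ (Fin n) → ℝ) (σ₁ σ₂ γ : ℝ)
    (hγ : γ ∈ Set.Ico (0 : ℝ) ((σ₁ + σ₂) / 2))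
    (hf₁ : StrongConvex σ₁ f₁) (hf₂ : StrongConvex σ₂ f₂)
    (hlevel : ∀ r : ℝ, Bornology.IsBounded {z : EuclideanSpace ℝ (Fin n) | f₁ z - f₂ z ≤ r})
    (x y : ℕ → EuclideanSpace ℝ (Fin n)) (hinit : x 0 = x 1)
    (hy : ∀ k, y k ∈ subdiff f₂ (x (k + 1)))
    (hstep : ∀ k, y k + γ • (x (k + 1) - x k) ∈ subdiff f₁ (x (k + 2))) :
    Bornology.IsBounded (Set.range x) := by
  obtain ⟨hγ0, hγlt⟩ := hγ
  rw [StrongConvex, ← strongConvexOn_iff_convex] at hf₁ hf₂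
  refine (hlevel (f₁ (x 1) - f₂ (x 1))).subset ?_
  rintro _ ⟨k, rfl⟩
  exact inertial_dca_objective_le_initial hf₁ hf₂ hγ0 (by linarith) hinit hy hstep k

/-- Theorem 3.1(i): boundedness of the iterates of the exact refined inertial DCA
when f = f₁ - f₂ is level-bounded.  Here `x 0 = x^{-1}`, `x 1 = x^0`. -/
theorem RInDCAe_bounded {n : ℕ}
    (f₁ f₂ : EuclideanSpace ℝ (Fin n) → ℝ) (σ₁ σ₂ γ : ℝ)
    (hσ₁ : 0 ≤ σ₁) (hσ₂ : 0 ≤ σ₂) (hpos : 0 < σ₁ + σ₂)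
    (hγ : γ ∈ Set.Ico (0 : ℝ) ((σ₁ + σ₂) / 2))
    (hf₁ : StrongConvex σ₁ f₁) (hf₂ : StrongConvex σ₂ f₂)
    (hlevel : ∀ r : ℝ, Bornology.IsBounded {z : EuclideanSpace ℝ (Fin n) | f₁ z - f₂ z ≤ r})
    (x y : ℕ → EuclideanSpace ℝ (Fin n)) (hinit : x 0 = x 1)
    (hy : ∀ k, y k ∈ subdiff f₂ (x (k + 1)))
    (hstep : ∀ k, y k + γ • (x (k + 1) - x k) ∈ subdiff f₁ (x (k + 2))) :
    Bornology.IsBounded (Set.range x) :=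
  RInDCAe_bounded_general f₁ f₂ σ₁ σ₂ γ hγ hf₁ hf₂ hlevel x y hinit hy hstep
end

section
/- Let f₁ be σ₁-convex, f₂ be σ₂-convex with σ₂ > 0, and fix λ ∈ (0,1), t ∈ (0,1] such that σ̄_t := σ₁(1-t) + σ₂ - λσ₂/t > 0, and γ ∈ [0, σ̄_t/2). Suppose yᵏ ∈ ∂f₂(xᵏ), yᵏ + γ(xᵏ - xᵏ⁻¹) ∈ ∂_{εᵏ⁺¹} f₁(xᵏ⁺¹) with 0 ≤ εᵏ⁺¹ ≤ (λσ₂/2)‖xᵏ⁺¹ - xᵏ‖². Then f(xᵏ⁺¹) + ((σ̄_t - γ)/2)‖xᵏ⁺¹ - xᵏ‖² ≤ f(xᵏ) + ((σ̄_t - γ)/2)‖xᵏ - xᵏ⁻¹‖² - ((σ̄_t - 2γ)/2)‖xᵏ - xᵏ⁻¹‖². -/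
/-!
Evaluating the ε-subgradient inequality of the σ₁-convex `f₁` at the point `(1 - t) xᵏ⁺¹ + t xᵏ`
and dividing by `t` bounds `f₁ xᵏ` from below by a quadratic model at `xᵏ⁺¹` of curvature
`σ₁ (1 - t)`, at the price of the error `ε / t`; the exact subgradient inequality of the σ₂-convex
`f₂` (the limit `t → 0⁺`) gives a model of curvature `σ₂`. Adding the two, the error
`ε / t ≤ λσ₂ / (2t) ‖xᵏ⁺¹ - xᵏ‖²` uses up part of the curvature, leaving `σ̄_t`, and the inertial
term `γ ⟪xᵏ - xᵏ⁻¹, xᵏ⁺¹ - xᵏ⟫` is split by Young's inequality.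
-/

open RealInnerProductSpace

/-- The ε-subdifferential of an ℝ-valued convex function. -/
def epsSubdiff {n : ℕ} (f : EuclideanSpace ℝ (Fin n) → ℝ) (ε : ℝ)
    (x : EuclideanSpace ℝ (Fin n)) : Set (EuclideanSpace ℝ (Fin n)) :=
  {y | ∀ z, f x + ⟪y, z - x⟫ - ε ≤ f z}

namespace StrongConvexOn

variable {E : Type*} [NormedAddCommGroup E] [InnerProductSpace ℝ E] {f : E → ℝ} {σ : ℝ} {x y : E}

theorem eps_subgradient_inequality {ε t : ℝ} (hf : StrongConvexOn Set.univ σ f)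
    (ht : t ∈ Set.Ioc (0 : ℝ) 1) (hy : ∀ z, f x + ⟪y, z - x⟫ - ε ≤ f z) (z : E) :
    f x + ⟪y, z - x⟫ + σ * (1 - t) / 2 * ‖z - x‖ ^ 2 - ε / t ≤ f z := by
  obtain ⟨ht0, ht1⟩ := ht
  have hconv := hf.2 (Set.mem_univ x) (Set.mem_univ z) (sub_nonneg.2 ht1) ht0.le
    (sub_add_cancel 1 t)
  simp only [smul_eq_mul, norm_sub_rev x z] at hconv
  have hsub := hy ((1 - t) • x + t • z)
  rw [show (1 - t) • x + t • z - x = t • (z - x) by rw [smul_sub, sub_smul, one_smul]; abel,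
    real_inner_smul_right] at hsub
  have key : t * (f x + ⟪y, z - x⟫ + σ * (1 - t) / 2 * ‖z - x‖ ^ 2 - f z) ≤ ε := by
    linarith
  rw [← le_div_iff₀' ht0] at key
  linarith

theorem subgradient_inequality (hf : StrongConvexOn Set.univ σ f)
    (hy : ∀ z, f x + ⟪y, z - x⟫ ≤ f z) (z : E) :
    f x + ⟪y, z - x⟫ + σ / 2 * ‖z - x‖ ^ 2 ≤ f z := by
  have hcont : Continuous fun t : ℝ => f x + ⟪y, z - x⟫ + σ * (1 - t) / 2 * ‖z - x‖ ^ 2 := by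
    fun_prop
  have hlim := (hcont.tendsto 0).mono_left (nhdsWithin_le_nhds (s := Set.Ioi 0))
  rw [sub_zero, mul_one] at hlim
  refine le_of_tendsto hlim ?_
  filter_upwards [Ioc_mem_nhdsGT zero_lt_one] with t ht
  simpa using hf.eps_subgradient_inequality (ε := 0) ht (by simpa using hy) z

end StrongConvexOn

theorem RInDCAn_descent_general {n : ℕ}
    (f₁ f₂ : EuclideanSpace ℝ (Fin n) → ℝ) (σ₁ σ₂ γ lam t ε : ℝ)
    (ht : t ∈ Set.Ioc (0 : ℝ) 1)
    (hγ : γ ∈ Set.Ico (0 : ℝ) ((σ₁ * (1 - t) + σ₂ - lam * σ₂ / t) / 2))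
    (hf₁ : StrongConvex σ₁ f₁) (hf₂ : StrongConvex σ₂ f₂)
    (xkm1 xk xkp1 yk : EuclideanSpace ℝ (Fin n))
    (hyk : yk ∈ subdiff f₂ xk)
    (hstep : yk + γ • (xk - xkm1) ∈ epsSubdiff f₁ ε xkp1)
    (hε : 0 ≤ ε ∧ ε ≤ lam * σ₂ / 2 * ‖xkp1 - xk‖ ^ 2) :
    (f₁ xkp1 - f₂ xkp1) + (σ₁ * (1 - t) + σ₂ - lam * σ₂ / t - γ) / 2 * ‖xkp1 - xk‖ ^ 2
      ≤ (f₁ xk - f₂ xk) + (σ₁ * (1 - t) + σ₂ - lam * σ₂ / t - γ) / 2 * ‖xk - xkm1‖ ^ 2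
        - (σ₁ * (1 - t) + σ₂ - lam * σ₂ / t - 2 * γ) / 2 * ‖xk - xkm1‖ ^ 2 := by
  have hf₁_step := (strongConvexOn_iff_convex.2 hf₁).eps_subgradient_inequality ht hstep xk
  have hf₂_step := (strongConvexOn_iff_convex.2 hf₂).subgradient_inequality hyk xkp1
  rw [← neg_sub xkp1 xk, inner_neg_right, inner_add_left, real_inner_smul_left, norm_neg]
    at hf₁_step
  have hε_div : ε / t ≤ lam * σ₂ / t / 2 * ‖xkp1 - xk‖ ^ 2 :=
    calc ε / t ≤ lam * σ₂ / 2 * ‖xkp1 - xk‖ ^ 2 / t := div_le_div_of_nonneg_right hε.2 ht.1.le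
      _ = lam * σ₂ / t / 2 * ‖xkp1 - xk‖ ^ 2 := by ring
  have hyoung : 2 * ⟪xk - xkm1, xkp1 - xk⟫ ≤ ‖xk - xkm1‖ ^ 2 + ‖xkp1 - xk‖ ^ 2 := by
    linarith [real_inner_le_norm (xk - xkm1) (xkp1 - xk),
      two_mul_le_add_sq ‖xk - xkm1‖ ‖xkp1 - xk‖]
  linarith [mul_le_mul_of_nonneg_left hyoung hγ.1]

/-- Lemma 3.2: descent inequality for one step of the refined inexact inertial DCA. -/
theorem RInDCAn_descent {n : ℕ}
    (f₁ f₂ : EuclideanSpace ℝ (Fin n) → ℝ) (σ₁ σ₂ γ lam t ε : ℝ)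
    (hσ₁ : 0 ≤ σ₁) (hσ₂ : 0 < σ₂)
    (hlam : lam ∈ Set.Ioo (0 : ℝ) 1) (ht : t ∈ Set.Ioc (0 : ℝ) 1)
    (hσbar : 0 < σ₁ * (1 - t) + σ₂ - lam * σ₂ / t)
    (hγ : γ ∈ Set.Ico (0 : ℝ) ((σ₁ * (1 - t) + σ₂ - lam * σ₂ / t) / 2))
    (hf₁ : StrongConvex σ₁ f₁) (hf₂ : StrongConvex σ₂ f₂)
    (xkm1 xk xkp1 yk : EuclideanSpace ℝ (Fin n))
    (hyk : yk ∈ subdiff f₂ xk)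
    (hstep : yk + γ • (xk - xkm1) ∈ epsSubdiff f₁ ε xkp1)
    (hε : 0 ≤ ε ∧ ε ≤ lam * σ₂ / 2 * ‖xkp1 - xk‖ ^ 2) :
    (f₁ xkp1 - f₂ xkp1) + (σ₁ * (1 - t) + σ₂ - lam * σ₂ / t - γ) / 2 * ‖xkp1 - xk‖ ^ 2
      ≤ (f₁ xk - f₂ xk) + (σ₁ * (1 - t) + σ₂ - lam * σ₂ / t - γ) / 2 * ‖xk - xkm1‖ ^ 2
        - (σ₁ * (1 - t) + σ₂ - lam * σ₂ / t - 2 * γ) / 2 * ‖xk - xkm1‖ ^ 2 :=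
  RInDCAn_descent_general f₁ f₂ σ₁ σ₂ γ lam t ε ht hγ hf₁ hf₂ xkm1 xk xkp1 yk hyk hstep hε
end

section
/- Let σ₁ > 0, σ₂ > 0, λ ∈ (0,1) with λσ₂/σ₁ < 1. Then with t = √(λσ₂/σ₁), one has σ̄_t/2 = (σ₁ + σ₂)/2 - √(λσ₁σ₂) > (1-λ)σ₂/2, where σ̄_t = σ₁(1-t) + σ₂ - λσ₂/t. -/
/-!
At t = √(λσ₂/σ₁) both terms σ₁ t and λσ₂ / t equal √(λσ₁σ₂), which gives the closed form of
σ̄_t. The claimed inequality then reduces to the strict AM–GM inequality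
2 √(σ₁ · λσ₂) < σ₁ + λσ₂, strict because λσ₂ < σ₁.
-/

namespace Real

theorem mul_sqrt_div_eq_sqrt_mul {x : ℝ} (hx : 0 ≤ x) (y : ℝ) : x * √(y / x) = √(x * y) := by
  rcases hx.eq_or_lt with rfl | hx
  · simp
  · calc x * √(y / x) = √(x ^ 2) * √(y / x) := by rw [sqrt_sq hx.le]
      _ = √(x ^ 2 * (y / x)) := (sqrt_mul (sq_nonneg x) _).symm
      _ = √(x * y) := by rw [sq, mul_assoc, mul_div_cancel₀ y hx.ne']

theorem div_sqrt_div_eq_sqrt_mul {y : ℝ} (hy : 0 ≤ y) (x : ℝ) : y / √(y / x) = √(x * y) := by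
  rw [sqrt_div hy, div_div_eq_mul_div, mul_div_right_comm, div_sqrt, sqrt_mul' x hy, mul_comm]

theorem two_mul_sqrt_mul_lt_add {x y : ℝ} (hx : 0 ≤ x) (hy : 0 ≤ y) (hxy : x ≠ y) :
    2 * √(x * y) < x + y := by
  have hsqrt : √x ≠ √y := fun h => hxy (by rw [← sq_sqrt hx, ← sq_sqrt hy, h])
  have hgap : 0 < (√x - √y) ^ 2 := by positivity [sub_ne_zero.mpr hsqrt]
  rw [sqrt_mul hx]
  nlinarith [sq_sqrt hx, sq_sqrt hy]

end Real

/-- With t = √(λσ₂/σ₁), the refined bound σ̄_t/2 equals (σ₁+σ₂)/2 - √(λσ₁σ₂) and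
is strictly larger than the original InDCA bound (1-λ)σ₂/2. -/
theorem refined_bound_larger (σ₁ σ₂ lam : ℝ)
    (hσ₁ : 0 < σ₁) (hσ₂ : 0 < σ₂) (hlam : lam ∈ Set.Ioo (0 : ℝ) 1)
    (hratio : lam * σ₂ / σ₁ < 1) :
    (σ₁ * (1 - Real.sqrt (lam * σ₂ / σ₁)) + σ₂ - lam * σ₂ / Real.sqrt (lam * σ₂ / σ₁)) / 2
        = (σ₁ + σ₂) / 2 - Real.sqrt (lam * σ₁ * σ₂) ∧
    (σ₁ + σ₂) / 2 - Real.sqrt (lam * σ₁ * σ₂) > (1 - lam) * σ₂ / 2 := by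
  have hc : 0 ≤ lam * σ₂ := (mul_pos hlam.1 hσ₂).le
  have hcσ₁ : lam * σ₂ < σ₁ := (div_lt_one hσ₁).mp hratio
  have hsqrt : Real.sqrt (lam * σ₁ * σ₂) = Real.sqrt (σ₁ * (lam * σ₂)) := by ring_nf
  refine ⟨?_, ?_⟩
  · rw [mul_sub, mul_one, Real.mul_sqrt_div_eq_sqrt_mul hσ₁.le,
      Real.div_sqrt_div_eq_sqrt_mul hc, hsqrt]
    ring
  · have hamgm := Real.two_mul_sqrt_mul_lt_add hσ₁.le hc hcσ₁.ne'
    rw [hsqrt]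
    linarith
end

section
/- Define H₁(λ) = (σ₁+σ₂)/2 - √(λσ₁σ₂) and H₂(λ) = (1-λ)σ₂/2 for λ ∈ (0,1) with σ₁ ≥ σ₂ > 0. Then H₁(λ) > H₂(λ) for all λ ∈ (0,1), and for fixed λ and σ₂ the gap H₁(λ) - H₂(λ) is strictly increasing in σ₁ on (λσ₂, ∞). -/
/-! Writing `t = λσ₂`, the gap is `(s + t)/2 - √(s t) = (√s - √t)²/2`, a square that vanishes
only at `s = t` and grows with `s` beyond it; since `t < σ₂ ≤ σ₁`, both claims follow. -/

open Real Set

lemma add_div_two_sub_sqrt_mul {s t : ℝ} (hs : 0 ≤ s) (ht : 0 ≤ t) :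
    (s + t) / 2 - √(s * t) = (√s - √t) ^ 2 / 2 := by
  rw [sqrt_mul hs, sub_sq, sq_sqrt hs, sq_sqrt ht]
  ring

lemma strictMonoOn_sqrt_sub_sqrt_sq_div_two {t : ℝ} (ht : 0 ≤ t) :
    StrictMonoOn (fun s => (√s - √t) ^ 2 / 2) (Ici t) := by
  intro a ha b _ hab
  have hta : √t ≤ √a := sqrt_le_sqrt ha
  have hab' : √a < √b := sqrt_lt_sqrt (ht.trans ha) hab
  simp only
  gcongr

/-- H₁(λ) > H₂(λ) on (0,1) when σ₁ ≥ σ₂ > 0, and the gap H₁ - H₂ is strictly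
increasing in σ₁ on (λσ₂, ∞). -/
theorem H1_gt_H2_and_gap_mono (σ₁ σ₂ lam : ℝ)
    (hσ₂ : 0 < σ₂) (hσ₁ : σ₂ ≤ σ₁) (hlam : lam ∈ Set.Ioo (0 : ℝ) 1) :
    ((σ₁ + σ₂) / 2 - Real.sqrt (lam * σ₁ * σ₂) > (1 - lam) * σ₂ / 2) ∧
    StrictMonoOn (fun s : ℝ => ((s + σ₂) / 2 - Real.sqrt (lam * s * σ₂)) - (1 - lam) * σ₂ / 2)
      (Set.Ioi (lam * σ₂)) := by
  obtain ⟨hl0, hl1⟩ := hlam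
  have ht : 0 ≤ lam * σ₂ := by positivity
  have htσ₁ : lam * σ₂ < σ₁ := by nlinarith
  have gap_eq : ∀ s, 0 ≤ s → ((s + σ₂) / 2 - √(lam * s * σ₂)) - (1 - lam) * σ₂ / 2
      = (√s - √(lam * σ₂)) ^ 2 / 2 := fun s hs => by
    rw [← add_div_two_sub_sqrt_mul hs ht]
    ring_nf
  constructor
  · rw [gt_iff_lt, ← sub_pos, gap_eq σ₁ (ht.trans htσ₁.le)]
    have : 0 < √σ₁ - √(lam * σ₂) := sub_pos.2 (sqrt_lt_sqrt ht htσ₁)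
    positivity
  · refine ((strictMonoOn_sqrt_sub_sqrt_sq_div_two ht).mono Ioi_subset_Ici_self).congr ?_
    exact fun s hs => (gap_eq s (ht.trans (le_of_lt hs))).symm
end

section
/- Define E(x,y,z) = f₁(x) - ⟨x,y⟩ + f₂*(y) + ((σ₁-γ)/2)‖x - z‖². For the exact refined inertial DCA sequence (yᵏ ∈ ∂f₂(xᵏ), yᵏ + γ(xᵏ - xᵏ⁻¹) ∈ ∂f₁(xᵏ⁺¹)) with f₁ σ₁-convex, f₂ σ₂-convex, σ₁+σ₂ > 0, γ ∈ [0,(σ₁+σ₂)/2), one has for every k ≥ 1: E(xᵏ⁺¹, yᵏ, xᵏ) ≤ E(xᵏ, yᵏ⁻¹, xᵏ⁻¹) - ((σ₁+σ₂-2γ)/2)‖xᵏ - xᵏ⁻¹‖². -/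
open RealInnerProductSpace

noncomputable def conj {n : ℕ} (f : EuclideanSpace ℝ (Fin n) → ℝ)
    (y : EuclideanSpace ℝ (Fin n)) : ℝ :=
  ⨆ z, (⟪y, z⟫ - f z)

/-- The auxiliary (Lyapunov) function E(x,y,z). -/
noncomputable def Efun {n : ℕ} (f₁ f₂ : EuclideanSpace ℝ (Fin n) → ℝ) (σ₁ γ : ℝ)
    (x y z : EuclideanSpace ℝ (Fin n)) : ℝ :=
  f₁ x - ⟪x, y⟫ + conj f₂ y + (σ₁ - γ) / 2 * ‖x - z‖ ^ 2

/-!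
At a subgradient the Fenchel–Young inequality is an equality, so both conjugate values in `E` are
`⟪y, x⟫ - f₂ x`. The strong subgradient inequality for `f₁` at `xᵏ⁺¹` (with subgradient
`yᵏ + γ(xᵏ - xᵏ⁻¹)`) and for `f₂` at `xᵏ⁻¹` (with subgradient `yᵏ⁻¹`), both evaluated at `xᵏ`,
reduce the claimed descent to `0 ≤ γ/2 ‖(xᵏ - xᵏ⁻¹) + (xᵏ - xᵏ⁺¹)‖²`.
-/

open Filter Topology

lemma conj_eq_of_mem_subdiff {n : ℕ} {f : EuclideanSpace ℝ (Fin n) → ℝ}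
    {x y : EuclideanSpace ℝ (Fin n)} (hy : y ∈ subdiff f x) :
    conj f y = ⟪y, x⟫ - f x := by
  have hle : ∀ z, ⟪y, z⟫ - f z ≤ ⟪y, x⟫ - f x := fun z => by
    have := hy z
    rw [inner_sub_right] at this
    linarith
  exact le_antisymm (ciSup_le hle) (le_ciSup ⟨_, Set.forall_mem_range.2 hle⟩ x)

lemma StrongConvexOn.add_inner_add_le_s14 {E : Type*} [NormedAddCommGroup E] [InnerProductSpace ℝ E]
    {s : Set E} {σ : ℝ} {f : E → ℝ} (hf : StrongConvexOn s σ f) {x v z : E} (hx : x ∈ s)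
    (hz : z ∈ s) (hv : ∀ w ∈ s, f x + ⟪v, w - x⟫ ≤ f w) :
    f x + ⟪v, z - x⟫ + σ / 2 * ‖z - x‖ ^ 2 ≤ f z := by
  -- the subgradient inequality at `(1 - t) • x + t • z`, divided by `t`, then `t → 0⁺`
  have hpert : ∀ t ∈ Set.Ioo (0 : ℝ) 1,
      f x + ⟪v, z - x⟫ + (1 - t) * (σ / 2 * ‖z - x‖ ^ 2) ≤ f z := by
    rintro t ⟨ht0, ht1⟩
    have hconv := hf.2 hx hz (sub_nonneg.2 ht1.le) ht0.le (sub_add_cancel 1 t)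
    have hsub := hv _ (hf.1 hx hz (sub_nonneg.2 ht1.le) ht0.le (sub_add_cancel 1 t))
    have hseg : (1 - t) • x + t • z - x = t • (z - x) := by
      rw [smul_sub, sub_smul, one_smul]; abel
    rw [hseg, real_inner_smul_right] at hsub
    rw [smul_eq_mul, smul_eq_mul, norm_sub_rev] at hconv
    have hscaled : t * (f x + ⟪v, z - x⟫ + (1 - t) * (σ / 2 * ‖z - x‖ ^ 2)) ≤ t * f z := by
      linarith
    exact le_of_mul_le_mul_left hscaled ht0
  have hlim : Tendsto (fun t : ℝ => f x + ⟪v, z - x⟫ + (1 - t) * (σ / 2 * ‖z - x‖ ^ 2))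
      (𝓝[>] 0) (𝓝 (f x + ⟪v, z - x⟫ + σ / 2 * ‖z - x‖ ^ 2)) :=
    tendsto_nhdsWithin_of_tendsto_nhds ((by fun_prop : Continuous _).tendsto' 0 _ (by ring))
  exact le_of_tendsto hlim (mem_of_superset (Ioo_mem_nhdsGT one_pos) hpert)

lemma StrongConvex.add_inner_add_le_s14 {n : ℕ} {σ : ℝ} {f : EuclideanSpace ℝ (Fin n) → ℝ}
    (hf : StrongConvex σ f) {x v : EuclideanSpace ℝ (Fin n)} (hv : v ∈ subdiff f x)
    (z : EuclideanSpace ℝ (Fin n)) :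
    f x + ⟪v, z - x⟫ + σ / 2 * ‖z - x‖ ^ 2 ≤ f z :=
  (strongConvexOn_iff_convex.2 hf).add_inner_add_le_s14 trivial trivial fun w _ => hv w

theorem Efun_descent_general {n : ℕ}
    (f₁ f₂ : EuclideanSpace ℝ (Fin n) → ℝ) (σ₁ σ₂ γ : ℝ)
    (hγ : γ ∈ Set.Ico (0 : ℝ) ((σ₁ + σ₂) / 2))
    (hf₁ : StrongConvex σ₁ f₁) (hf₂ : StrongConvex σ₂ f₂)
    (xkm1 xk xkp1 ykm1 yk : EuclideanSpace ℝ (Fin n))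
    (hykm1 : ykm1 ∈ subdiff f₂ xkm1) (hyk : yk ∈ subdiff f₂ xk)
    (hstep : yk + γ • (xk - xkm1) ∈ subdiff f₁ xkp1) :
    Efun f₁ f₂ σ₁ γ xkp1 yk xk
      ≤ Efun f₁ f₂ σ₁ γ xk ykm1 xkm1 - (σ₁ + σ₂ - 2 * γ) / 2 * ‖xk - xkm1‖ ^ 2 := by
  have h₁ := hf₁.add_inner_add_le_s14 hstep xk
  have h₂ := hf₂.add_inner_add_le_s14 hykm1 xk
  have hsq : 0 ≤ γ / 2 * ‖(xk - xkm1) + (xk - xkp1)‖ ^ 2 := by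
    have := hγ.1
    positivity
  have hinner₁ : ⟪yk, xk⟫ - ⟪xkp1, yk⟫ = ⟪yk, xk - xkp1⟫ := by
    rw [inner_sub_right, real_inner_comm xkp1]
  have hinner₂ : ⟪ykm1, xkm1⟫ - ⟪xk, ykm1⟫ = -⟪ykm1, xk - xkm1⟫ := by
    rw [inner_sub_right, real_inner_comm xk]; ring
  rw [inner_add_left, real_inner_smul_left] at h₁
  rw [norm_add_sq_real] at hsq
  rw [Efun, Efun, conj_eq_of_mem_subdiff hyk, conj_eq_of_mem_subdiff hykm1, norm_sub_rev xkp1]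
  linarith

/-- Proposition 4.1(i): descent of the auxiliary function E along the
exact refined inertial DCA iteration. -/
theorem Efun_descent {n : ℕ}
    (f₁ f₂ : EuclideanSpace ℝ (Fin n) → ℝ) (σ₁ σ₂ γ : ℝ)
    (hσ₁ : 0 ≤ σ₁) (hσ₂ : 0 ≤ σ₂) (hpos : 0 < σ₁ + σ₂)
    (hγ : γ ∈ Set.Ico (0 : ℝ) ((σ₁ + σ₂) / 2))
    (hf₁ : StrongConvex σ₁ f₁) (hf₂ : StrongConvex σ₂ f₂)
    (xkm1 xk xkp1 ykm1 yk : EuclideanSpace ℝ (Fin n))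
    (hykm1 : ykm1 ∈ subdiff f₂ xkm1) (hyk : yk ∈ subdiff f₂ xk)
    (hstep : yk + γ • (xk - xkm1) ∈ subdiff f₁ xkp1) :
    Efun f₁ f₂ σ₁ γ xkp1 yk xk
      ≤ Efun f₁ f₂ σ₁ γ xk ykm1 xkm1 - (σ₁ + σ₂ - 2 * γ) / 2 * ‖xk - xkm1‖ ^ 2 :=
  Efun_descent_general f₁ f₂ σ₁ σ₂ γ hγ hf₁ hf₂ xkm1 xk xkp1 ykm1 yk hykm1 hyk hstep
end

section
/- With E(x,y,z) = f₁(x) - ⟨x,y⟩ + f₂*(y) + ((σ₁-γ)/2)‖x - z‖² and the exact refined inertial DCA sequence, one has for all k ≥ 1: E(xᵏ, yᵏ⁻¹, xᵏ⁻¹) ≥ f(xᵏ) + ((σ₁-γ)/2)‖xᵏ - xᵏ⁻¹‖² ≥ f* + ((σ₁-γ)/2)‖xᵏ - xᵏ⁻¹‖², where f* = inf f > -∞. In particular {E(xᵏ, yᵏ⁻¹, xᵏ⁻¹)} is bounded below and, being nonincreasing, convergent. -/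
open RealInnerProductSpace Filter Topology

/-! The energy is bounded below because, once `conj f₂ y` is evaluated through a subgradient,
`Efun` is `f₁ - f₂` plus a multiple of `‖x - z‖²`, and strong convexity of `f₂` raises that multiple
to `(σ₁ + σ₂ - γ) / 2 > 0`. It decreases along the iteration by the three-point inequality for the
strongly convex `f₁` and `f₂`, the inertial cross term being absorbed by Young's inequality as long
as `2γ ≤ σ₁ + σ₂`. A bounded below nonincreasing sequence converges. -/

variable {n : ℕ} {f f₁ f₂ : EuclideanSpace ℝ (Fin n) → ℝ} {σ σ₁ σ₂ γ : ℝ}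
  {a b c p q s x y y' z : EuclideanSpace ℝ (Fin n)}

/-- The strong-convexity inequality along the segment `[p, q]`, before letting `t → 0`. -/
lemma StrongConvex.inner_add_sq_le_of_mem_Ioc (hf : StrongConvex σ f) (hs : s ∈ subdiff f p)
    {t : ℝ} (ht : t ∈ Set.Ioc 0 1) :
    ⟪s, q - p⟫ + σ / 2 * ‖q - p‖ ^ 2 ≤ f q - f p + t * (σ / 2 * ‖q - p‖ ^ 2) := by
  obtain ⟨ht0, ht1⟩ := ht
  have hconv := hf.2 (Set.mem_univ p) (Set.mem_univ q) (sub_nonneg.2 ht1) ht0.le (by ring)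
  have hsub := hs (p + t • (q - p))
  have hseg : (1 - t) • p + t • q = p + t • (q - p) := by module
  have hnorm_seg : ‖p + t • (q - p)‖ ^ 2 = ‖p‖ ^ 2 + 2 * (t * ⟪p, q - p⟫) + t ^ 2 * ‖q - p‖ ^ 2 := by
    rw [norm_add_sq_real, real_inner_smul_right, norm_smul, mul_pow, Real.norm_eq_abs, sq_abs]
  have hnorm_q : ‖q‖ ^ 2 = ‖p‖ ^ 2 + 2 * ⟪p, q - p⟫ + ‖q - p‖ ^ 2 := by
    simpa using norm_add_sq_real p (q - p)
  simp only [hseg, hnorm_seg, hnorm_q, smul_eq_mul] at hconv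
  rw [add_sub_cancel_left, real_inner_smul_right] at hsub
  refine le_of_mul_le_mul_left ?_ ht0
  linear_combination hsub + hconv

lemma StrongConvex.le_of_mem_subdiff (hf : StrongConvex σ f) (hs : s ∈ subdiff f p)
    (q : EuclideanSpace ℝ (Fin n)) :
    f p + ⟪s, q - p⟫ + σ / 2 * ‖q - p‖ ^ 2 ≤ f q := by
  have hlim : Tendsto (fun t : ℝ => f q - f p + t * (σ / 2 * ‖q - p‖ ^ 2)) (𝓝[>] 0)
      (𝓝 (f q - f p)) := by
    have : Continuous fun t : ℝ => f q - f p + t * (σ / 2 * ‖q - p‖ ^ 2) := by fun_prop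
    simpa using (this.tendsto 0).mono_left nhdsWithin_le_nhds
  have := ge_of_tendsto hlim <|
    eventually_of_mem (Ioc_mem_nhdsGT one_pos) fun t ht => hf.inner_add_sq_le_of_mem_Ioc hs ht
  linarith

lemma conj_eq_of_mem_subdiff_s15 (hs : s ∈ subdiff f p) : conj f s = ⟪s, p⟫ - f p := by
  have hle : ∀ z, ⟪s, z⟫ - f z ≤ ⟪s, p⟫ - f p := fun z => by
    have := hs z
    rw [inner_sub_right] at this
    linarith
  exact le_antisymm (ciSup_le hle) (le_ciSup ⟨_, Set.forall_mem_range.2 hle⟩ p)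

lemma Efun_eq_of_mem_subdiff (hy : y ∈ subdiff f₂ z) :
    Efun f₁ f₂ σ₁ γ x y z = f₁ x - f₂ z - ⟪y, x - z⟫ + (σ₁ - γ) / 2 * ‖x - z‖ ^ 2 := by
  rw [Efun, conj_eq_of_mem_subdiff_s15 hy, inner_sub_right, real_inner_comm x]
  ring

lemma Efun_ge_of_mem_subdiff (hy : y ∈ subdiff f₂ z) :
    f₁ x - f₂ x + (σ₁ - γ) / 2 * ‖x - z‖ ^ 2 ≤ Efun f₁ f₂ σ₁ γ x y z := by
  rw [Efun_eq_of_mem_subdiff hy]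
  linarith [hy x]

lemma Efun_ge_of_strongConvex (hf₂ : StrongConvex σ₂ f₂) (hy : y ∈ subdiff f₂ z) :
    f₁ x - f₂ x + (σ₁ + σ₂ - γ) / 2 * ‖x - z‖ ^ 2 ≤ Efun f₁ f₂ σ₁ γ x y z := by
  rw [Efun_eq_of_mem_subdiff hy]
  linarith [hf₂.le_of_mem_subdiff hy x]

/-- Sufficient decrease of the energy over one step `(a, b) ↦ (b, c)` of the inertial iteration. -/
lemma Efun_add_sq_le_of_step (hf₁ : StrongConvex σ₁ f₁) (hf₂ : StrongConvex σ₂ f₂) (hγ : 0 ≤ γ)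
    (hy : y ∈ subdiff f₂ a) (hy' : y' ∈ subdiff f₂ b)
    (hstep : y' + γ • (b - a) ∈ subdiff f₁ c) :
    Efun f₁ f₂ σ₁ γ c y' b + (σ₁ + σ₂ - 2 * γ) / 2 * ‖b - a‖ ^ 2 ≤ Efun f₁ f₂ σ₁ γ b y a := by
  have h₁ := hf₁.le_of_mem_subdiff hstep b
  have h₂ := hf₂.le_of_mem_subdiff hy b
  rw [inner_add_left, real_inner_smul_left] at h₁
  -- Young's inequality for the inertial term `γ ⟪b - a, b - c⟫`
  have hyoung : -(‖b - a‖ ^ 2 + ‖b - c‖ ^ 2) ≤ 2 * ⟪b - a, b - c⟫ := by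
    nlinarith [norm_add_sq_real (b - a) (b - c), sq_nonneg ‖b - a + (b - c)‖]
  have hcb : ‖c - b‖ = ‖b - c‖ := norm_sub_rev c b
  have hinner : ⟪y', b - c⟫ = -⟪y', c - b⟫ := by rw [← inner_neg_right, neg_sub]
  rw [Efun_eq_of_mem_subdiff hy, Efun_eq_of_mem_subdiff hy', hcb]
  nlinarith [mul_le_mul_of_nonneg_left hyoung hγ]

theorem Efun_bounded_below_and_converges_general {n : ℕ}
    (f₁ f₂ : EuclideanSpace ℝ (Fin n) → ℝ) (σ₁ σ₂ γ fstar : ℝ)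
    (hγ : γ ∈ Set.Ico (0 : ℝ) ((σ₁ + σ₂) / 2))
    (hf₁ : StrongConvex σ₁ f₁) (hf₂ : StrongConvex σ₂ f₂)
    (hfstar : ∀ z, fstar ≤ f₁ z - f₂ z)
    (x y : ℕ → EuclideanSpace ℝ (Fin n))
    (hy : ∀ k, y k ∈ subdiff f₂ (x (k + 1)))
    (hstep : ∀ k, y k + γ • (x (k + 1) - x k) ∈ subdiff f₁ (x (k + 2))) :
    (∀ k, Efun f₁ f₂ σ₁ γ (x (k + 2)) (y k) (x (k + 1))
        ≥ (f₁ (x (k + 2)) - f₂ (x (k + 2))) + (σ₁ - γ) / 2 * ‖x (k + 2) - x (k + 1)‖ ^ 2) ∧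
    (∀ k, Efun f₁ f₂ σ₁ γ (x (k + 2)) (y k) (x (k + 1))
        ≥ fstar + (σ₁ - γ) / 2 * ‖x (k + 2) - x (k + 1)‖ ^ 2) ∧
    (∃ L : ℝ, Tendsto (fun k => Efun f₁ f₂ σ₁ γ (x (k + 2)) (y k) (x (k + 1)))
        atTop (nhds L)) := by
  obtain ⟨hγ₀, hγ₁⟩ := hγ
  set E := fun k => Efun f₁ f₂ σ₁ γ (x (k + 2)) (y k) (x (k + 1))
  have hgap : ∀ k, f₁ (x (k + 2)) - f₂ (x (k + 2)) + (σ₁ - γ) / 2 * ‖x (k + 2) - x (k + 1)‖ ^ 2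
      ≤ E k := fun k => Efun_ge_of_mem_subdiff (hy k)
  have hbdd : ∀ k, fstar ≤ E k := fun k => by
    have := Efun_ge_of_strongConvex (f₁ := f₁) (σ₁ := σ₁) (γ := γ) (x := x (k + 2)) hf₂ (hy k)
    nlinarith [hfstar (x (k + 2)), sq_nonneg ‖x (k + 2) - x (k + 1)‖]
  have hanti : Antitone E := antitone_nat_of_succ_le fun k => by
    have := Efun_add_sq_le_of_step hf₁ hf₂ hγ₀ (hy k) (hy (k + 1)) (hstep (k + 1))
    nlinarith [sq_nonneg ‖x (k + 2) - x (k + 1)‖]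
  refine ⟨hgap, fun k => ?_, ⟨_, tendsto_atTop_ciInf hanti ⟨fstar, Set.forall_mem_range.2 hbdd⟩⟩⟩
  linarith [hgap k, hfstar (x (k + 2))]

/-- Proposition 4.1(iii), lower bound part: E(xᵏ,yᵏ⁻¹,xᵏ⁻¹) ≥ f(xᵏ) + ((σ₁-γ)/2)‖xᵏ-xᵏ⁻¹‖²
≥ f* + ((σ₁-γ)/2)‖xᵏ-xᵏ⁻¹‖², and the nonincreasing sequence {E(xᵏ,yᵏ⁻¹,xᵏ⁻¹)} converges.
Here `x 0 = x^{-1}`, `x (k+1) = x^k`, and `y k = y^k ∈ ∂f₂(x^k)`. -/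
theorem Efun_bounded_below_and_converges {n : ℕ}
    (f₁ f₂ : EuclideanSpace ℝ (Fin n) → ℝ) (σ₁ σ₂ γ fstar : ℝ)
    (hσ₁ : 0 ≤ σ₁) (hσ₂ : 0 ≤ σ₂) (hpos : 0 < σ₁ + σ₂)
    (hγ : γ ∈ Set.Ico (0 : ℝ) ((σ₁ + σ₂) / 2))
    (hf₁ : StrongConvex σ₁ f₁) (hf₂ : StrongConvex σ₂ f₂)
    (hfstar : ∀ z, fstar ≤ f₁ z - f₂ z)
    (x y : ℕ → EuclideanSpace ℝ (Fin n)) (hinit : x 0 = x 1)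
    (hy : ∀ k, y k ∈ subdiff f₂ (x (k + 1)))
    (hstep : ∀ k, y k + γ • (x (k + 1) - x k) ∈ subdiff f₁ (x (k + 2))) :
    (∀ k, Efun f₁ f₂ σ₁ γ (x (k + 2)) (y k) (x (k + 1))
        ≥ (f₁ (x (k + 2)) - f₂ (x (k + 2))) + (σ₁ - γ) / 2 * ‖x (k + 2) - x (k + 1)‖ ^ 2) ∧
    (∀ k, Efun f₁ f₂ σ₁ γ (x (k + 2)) (y k) (x (k + 1))
        ≥ fstar + (σ₁ - γ) / 2 * ‖x (k + 2) - x (k + 1)‖ ^ 2) ∧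
    (∃ L : ℝ, Tendsto (fun k => Efun f₁ f₂ σ₁ γ (x (k + 2)) (y k) (x (k + 1)))
        atTop (nhds L)) :=
  Efun_bounded_below_and_converges_general f₁ f₂ σ₁ σ₂ γ fstar hγ hf₁ hf₂ hfstar x y hy hstep
end

section
/- Let {aₖ}ₖ≥1 be nonnegative reals and {Δₖ} nonnegative with ∑ₖ Δₖ < ∞, and suppose there is D, C > 0 such that aₖ² ≤ (D/C)Δₖ(aₖ + aₖ₋₁) for all k ≥ N. Then ∑ₖ aₖ < ∞. -/
/-!
AM–GM turns `a (k+1) ^ 2 ≤ M (a (k+1) + a k)` into the linear recursion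
`a (k+1) ≤ 2 M + a k / 2`. A nonnegative sequence obeying such a contracting recursion with a
summable forcing term `u` is summable: summing the recursion, the partial sums `S` of
`a (k+1)` satisfy `S ≤ ∑ u + r (a 0 + S)` with `r < 1`.
-/

lemma le_two_mul_add_half_of_sq_le_mul_add {x y M : ℝ} (hx : 0 ≤ x) (hy : 0 ≤ y)
    (hM : 0 ≤ M) (h : x ^ 2 ≤ M * (x + y)) : x ≤ 2 * M + y / 2 := by
  nlinarith [mul_nonneg hM hx, mul_nonneg hM hy, mul_nonneg hx hy]

lemma summable_of_succ_le_add_mul {a u : ℕ → ℝ} {r : ℝ} (ha : ∀ k, 0 ≤ a k)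
    (hu : ∀ k, 0 ≤ u k) (hsum : Summable u) (hr₀ : 0 ≤ r) (hr₁ : r < 1)
    (hrec : ∀ k, a (k + 1) ≤ u (k + 1) + r * a k) : Summable a := by
  refine (summable_nat_add_iff 1).mp <| summable_of_sum_range_le
    (c := (∑' k, u k + r * a 0) / (1 - r)) (fun k => ha (k + 1)) fun n => ?_
  have hu_le : ∑ k ∈ Finset.range n, u (k + 1) ≤ ∑' k, u k := by
    linarith [hu 0, Finset.sum_range_succ' u n, hsum.sum_le_tsum (Finset.range (n + 1))
      (fun k _ => hu k)]
  have hshift : ∑ k ∈ Finset.range n, a k ≤ a 0 + ∑ k ∈ Finset.range n, a (k + 1) := by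
    linarith [ha n, Finset.sum_range_succ' a n, Finset.sum_range_succ a n]
  have hsum_rec : ∑ k ∈ Finset.range n, a (k + 1) ≤
      ∑ k ∈ Finset.range n, u (k + 1) + r * ∑ k ∈ Finset.range n, a k := by
    rw [Finset.mul_sum, ← Finset.sum_add_distrib]
    exact Finset.sum_le_sum fun k _ => hrec k
  rw [le_div_iff₀ (by linarith)]
  linarith [mul_le_mul_of_nonneg_left hshift hr₀]

/-- Abstract summability lemma in the KL convergence proof. -/
theorem KL_summability (a Δ : ℕ → ℝ) (D C : ℝ) (N : ℕ)
    (ha : ∀ k, 0 ≤ a k) (hΔ : ∀ k, 0 ≤ Δ k) (hsum : Summable Δ)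
    (hD : 0 < D) (hC : 0 < C)
    (hrec : ∀ k ≥ N, (a (k + 1)) ^ 2 ≤ D / C * Δ (k + 1) * (a (k + 1) + a k)) :
    Summable a := by
  have hc : 0 ≤ D / C := (div_pos hD hC).le
  have hlin : ∀ k, a (k + N + 1) ≤ 2 * (D / C) * Δ (k + N + 1) + 1 / 2 * a (k + N) := by
    intro k
    have h := le_two_mul_add_half_of_sq_le_mul_add (ha _) (ha _) (mul_nonneg hc (hΔ _))
      (by simpa only [mul_assoc] using hrec (k + N) (Nat.le_add_left N k))
    linarith
  refine (summable_nat_add_iff N).mp (summable_of_succ_le_add_mul (r := 1 / 2)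
    (fun k => ha (k + N)) (fun k => mul_nonneg (by positivity) (hΔ (k + N)))
    (((summable_nat_add_iff N).mpr hsum).mul_left (2 * (D / C))) (by norm_num) (by norm_num) ?_)
  simpa only [Nat.add_right_comm _ 1 N] using hlin
end
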